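/- Given two points p and q in d-dimensional space with nonnegative integer coordinates, any point r lying in the axis-aligned rectangle with p and q as opposite corners (i.e., each coordinate of r lies between the corresponding coordinates of p and q, where p ≤ q coordinatewise) satisfies p ≤ r ≤ q in the Morton (Z-)ordering, defined as the lexicographic order on the bit-interleaving of the coordinates. -/
import Mathlib


/-- The Morton (Z-order) code of a point in `ℕ^d`, obtained by interleaving the
binary representations of the `d` coordinates, using `B` bits per coordinate. -/
def mortonCode (d B : ℕ) (p : Fin d → ℕ) : ℕ :=
  ∑ i : Fin d, ∑ j ∈ Finset.range B, (Nat.testBit (p i) j).toNat * 2 ^ (j * d + i.val)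

/-- Spread the low `B` bits of `x` as digits in base `c`. -/
def spreadB (c B x : ℕ) : ℕ := ∑ j ∈ Finset.range B, (Nat.testBit x j).toNat * c ^ j

lemma spreadB_succ (c B x : ℕ) :
    spreadB c (B+1) x = c * spreadB c B (x / 2) + x % 2 := by
  unfold spreadB
  rw [Finset.sum_range_succ']
  have h0 : (Nat.testBit x 0).toNat * c ^ 0 = x % 2 := by
    rcases Nat.mod_two_eq_zero_or_one x with h | h <;> simp [Nat.toNat_testBit, h]
  rw [h0, Finset.mul_sum]
  congr 1
  refine Finset.sum_congr rfl fun j _ => ?_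
  rw [Nat.testBit_succ]
  ring

lemma spreadB_strictMono (c : ℕ) (hc : 2 ≤ c) :
    ∀ B x y, x < y → y < 2 ^ B → spreadB c B x < spreadB c B y := by
  intro B
  induction B with
  | zero => intro x y hxy hy; simp at hy; omega
  | succ B ih =>
    intro x y hxy hy
    rw [spreadB_succ, spreadB_succ]
    have hy2 : y / 2 < 2 ^ B := by
      rw [pow_succ] at hy; omega
    have hd : x / 2 ≤ y / 2 := Nat.div_le_div_right (le_of_lt hxy)
    rcases lt_or_eq_of_le hd with h | h
    · have hs : spreadB c B (x / 2) < spreadB c B (y / 2) := ih _ _ h hy2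
      have h1 : c * (spreadB c B (x / 2) + 1) ≤ c * spreadB c B (y / 2) :=
        Nat.mul_le_mul_left c hs
      rw [Nat.mul_add, mul_one] at h1
      have hx2 : x % 2 ≤ 1 := by omega
      set a := spreadB c B (x / 2)
      set b := spreadB c B (y / 2)
      have hca : c * a + c ≤ c * b := h1
      omega
    · have hmx := Nat.div_add_mod x 2
      have hmy := Nat.div_add_mod y 2
      have : x % 2 < y % 2 := by omega
      rw [h]; omega

lemma spreadB_mono (c : ℕ) (hc : 2 ≤ c) {B x y : ℕ} (hxy : x ≤ y) (hy : y < 2 ^ B) :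
    spreadB c B x ≤ spreadB c B y := by
  rcases eq_or_lt_of_le hxy with rfl | h
  · exact le_refl _
  · exact le_of_lt (spreadB_strictMono c hc B x y h hy)

lemma mortonCode_eq (d B : ℕ) (p : Fin d → ℕ) :
    mortonCode d B p = ∑ i : Fin d, 2 ^ i.val * spreadB (2 ^ d) B (p i) := by
  unfold mortonCode spreadB
  refine Finset.sum_congr rfl fun i _ => ?_
  rw [Finset.mul_sum]
  refine Finset.sum_congr rfl fun j _ => ?_
  rw [pow_add, ← pow_mul, mul_comm j d, pow_mul]
  ring

lemma mortonCode_mono (d B : ℕ) (p r : Fin d → ℕ) (hpr : ∀ i, p i ≤ r i)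
    (hr : ∀ i, r i < 2 ^ B) : mortonCode d B p ≤ mortonCode d B r := by
  rw [mortonCode_eq, mortonCode_eq]
  refine Finset.sum_le_sum fun i _ => ?_
  have hd : 0 < d := i.pos
  have hc : 2 ≤ 2 ^ d := by
    calc 2 = 2 ^ 1 := (pow_one 2).symm
    _ ≤ 2 ^ d := Nat.pow_le_pow_right (by norm_num) hd
  exact Nat.mul_le_mul_left _ (spreadB_mono _ hc (hpr i) (hr i))

/-- Given `p ≤ q` coordinatewise, any point `r` in the axis-aligned rectangle with
corners `p` and `q` satisfies `p ≤ r ≤ q` in the Morton ordering (lexicographic order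
on bit-interleavings). -/
theorem morton_rectangle_between (d B : ℕ) (p q r : Fin d → ℕ)
    (hpq : ∀ i, p i ≤ q i)
    (hpr : ∀ i, p i ≤ r i) (hrq : ∀ i, r i ≤ q i)
    (hbits : ∀ i, q i < 2 ^ B) :
    mortonCode d B p ≤ mortonCode d B r ∧ mortonCode d B r ≤ mortonCode d B q := by
  have hr : ∀ i, r i < 2 ^ B := fun i => lt_of_le_of_lt (hrq i) (hbits i)
  exact ⟨mortonCode_mono d B p r hpr hr, mortonCode_mono d B r q hrq hbits⟩
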